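/- arXiv:math/9811102 — 6 statements merged into one kernel-verified Lean document; each statement's English description precedes it below -/
import Mathlib

section
/- Let $G$ be a finite group. Every torsion element of the group of singular orbit data $\mathbb{B}_G$ has order dividing 2; more precisely, if $\alpha\in\mathbb{B}_G$ satisfies $n\cdot\alpha=0$ for some integer $n\ge 1$, then already $2\cdot\alpha=0$. -/
open Finsupp

/-- The natural map from conjugacy classes of `G` to the abelianization of `G`. -/
def conjToAb {G : Type*} [Group G] : ConjClasses G → Abelianization G :=
  Quotient.lift Abelianization.of (fun a b (h : IsConj a b) => by
    obtain ⟨c, hc⟩ := h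
    have : Abelianization.of (c * a) = Abelianization.of (b * c) := by
      rw [hc.eq]
    simpa [map_mul, mul_comm] using this)

@[simp] lemma conjToAb_mk {G : Type*} [Group G] (a : G) :
    conjToAb (ConjClasses.mk a) = Abelianization.of a := rfl

/-- The degree map sending a formal `ℤ`-combination of conjugacy classes to the corresponding
product in the abelianization. -/
noncomputable def degMap (G : Type*) [Group G] :
    (ConjClasses G →₀ ℤ) →+ Additive (Abelianization G) :=
  Finsupp.liftAddHom (fun c => (zmultiplesHom _) (Additive.ofMul (conjToAb c)))

@[simp] lemma degMap_single {G : Type*} [Group G] (a : G) (k : ℤ) :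
    degMap G (Finsupp.single (ConjClasses.mk a) k)
      = k • (Additive.ofMul (Abelianization.of a)) := by
  simp [degMap]

/-- `lambdaKer G` consists of the formal `ℤ`-combinations of conjugacy classes whose product
lies in the commutator subgroup; these are the (differences of) singular orbit data. -/
noncomputable def lambdaKer (G : Type*) [Group G] : AddSubgroup (ConjClasses G →₀ ℤ) :=
  (degMap G).ker

/-- The subgroup of relations: the class of the identity, and the cancelling pairs
`[γ̂, γ̂⁻¹]`. -/
noncomputable def bRel (G : Type*) [Group G] : AddSubgroup (ConjClasses G →₀ ℤ) :=
  AddSubgroup.closure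
    (insert (Finsupp.single (ConjClasses.mk (1 : G)) 1)
      {x | ∃ γ : G, x = Finsupp.single (ConjClasses.mk γ) 1
        + Finsupp.single (ConjClasses.mk γ⁻¹) 1})

/-- The group of singular orbit data `𝔹_G`. -/
abbrev BG (G : Type*) [Group G] :=
  (lambdaKer G) ⧸ ((bRel G).addSubgroupOf (lambdaKer G))

/-- The formal sum of conjugacy classes corresponding to a finite (multi)set of group
elements, presented as a list. -/
noncomputable def bdatum (G : Type*) [Group G] (l : List G) : ConjClasses G →₀ ℤ :=
  (l.map (fun γ => Finsupp.single (ConjClasses.mk γ) (1 : ℤ))).sum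

lemma degMap_bdatum {G : Type*} [Group G] (l : List G) :
    degMap G (bdatum G l) = Additive.ofMul (Abelianization.of l.prod) := by
  induction l with
  | nil => simp [bdatum]
  | cons a t ih =>
      have : bdatum G (a :: t) = Finsupp.single (ConjClasses.mk a) 1 + bdatum G t := by
        simp [bdatum]
      rw [this, map_add, ih, degMap_single]
      simp [← ofMul_mul]

lemma bdatum_mem_lambdaKer {G : Type*} [Group G] (l : List G)
    (h : l.prod ∈ commutator G) : bdatum G l ∈ lambdaKer G := by
  have : Abelianization.of l.prod = 1 := (QuotientGroup.eq_one_iff _).2 h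
  simp [lambdaKer, AddMonoidHom.mem_ker, degMap_bdatum, this]

lemma bdatum_mem_lambdaKer_of_prod_eq_one {G : Type*} [Group G] (l : List G)
    (h : l.prod = 1) : bdatum G l ∈ lambdaKer G :=
  bdatum_mem_lambdaKer l (by simp [h, Subgroup.one_mem])

/-- The element of `𝔹_G` determined by a list of group elements whose product lies in the
commutator subgroup. -/
noncomputable def bmk {G : Type*} [Group G] (l : List G) (h : bdatum G l ∈ lambdaKer G) :
    BG G :=
  QuotientAddGroup.mk (⟨bdatum G l, h⟩ : lambdaKer G)

instance ConjClasses.instInv {G : Type*} [Group G] : Inv (ConjClasses G) where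
  inv := Quotient.map (·⁻¹) fun a b hab => by
    obtain ⟨c, rfl⟩ := isConj_iff.1 hab
    exact isConj_iff.2 ⟨c, conj_inv.symm⟩

@[simp] lemma ConjClasses.inv_mk {G : Type*} [Group G] (a : G) :
    (ConjClasses.mk a)⁻¹ = ConjClasses.mk a⁻¹ := rfl

noncomputable def conjInvHom (G : Type*) [Group G] :
    (ConjClasses G →₀ ℤ) →+ (ConjClasses G →₀ ℤ) :=
  Finsupp.mapDomain.addMonoidHom (·⁻¹)

@[simp] lemma conjInvHom_single {G : Type*} [Group G] (a : G) (k : ℤ) :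
    conjInvHom G (single (ConjClasses.mk a) k) = single (ConjClasses.mk a⁻¹) k := by
  simp [conjInvHom, mapDomain_single]

lemma conjInvHom_eq_self_of_mem_bRel {G : Type*} [Group G] {y : ConjClasses G →₀ ℤ}
    (hy : y ∈ bRel G) : conjInvHom G y = y := by
  induction hy using AddSubgroup.closure_induction with
  | mem x hx =>
    rcases hx with rfl | ⟨γ, rfl⟩
    · simp
    · simp [add_comm]
  | zero => simp
  | add a b _ _ ha hb => simp [ha, hb]
  | neg a _ ha => simp [ha]

lemma add_conjInvHom_mem_bRel {G : Type*} [Group G] (x : ConjClasses G →₀ ℤ) :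
    x + conjInvHom G x ∈ bRel G := by
  induction x using Finsupp.induction_linear with
  | zero => simp [zero_mem]
  | add f g hf hg =>
    rw [map_add, add_add_add_comm]
    exact add_mem hf hg
  | single c k =>
    obtain ⟨γ, rfl⟩ := c.exists_rep
    have hpair : single (ConjClasses.mk γ) 1 + single (ConjClasses.mk γ⁻¹) 1 ∈ bRel G :=
      AddSubgroup.subset_closure (Or.inr ⟨γ, rfl⟩)
    simpa [smul_single] using zsmul_mem hpair k

/-- Since `bRel G` is fixed by inversion, `n • x ∈ bRel G` forces `x` to be fixed (no torsion
in `ConjClasses G →₀ ℤ`), and then `2 • x = x + conjInvHom G x ∈ bRel G`. -/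
lemma two_nsmul_mem_bRel_of_nsmul_mem {G : Type*} [Group G] {x : ConjClasses G →₀ ℤ} {n : ℕ}
    (hn : n ≠ 0) (h : n • x ∈ bRel G) : 2 • x ∈ bRel G := by
  have hfix : conjInvHom G x = x := by
    apply IsAddTorsionFree.nsmul_right_injective hn
    simpa only [map_nsmul] using conjInvHom_eq_self_of_mem_bRel h
  simpa only [hfix, ← two_nsmul] using add_conjInvHom_mem_bRel x

theorem torsion_of_BG_is_two_torsion_general (G : Type*) [Group G]
    (α : BG G) (n : ℕ) (hn : 1 ≤ n) (h : n • α = 0) : 2 • α = 0 := by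
  induction α using QuotientAddGroup.induction_on with
  | H x =>
    rw [← QuotientAddGroup.mk_nsmul, QuotientAddGroup.eq_zero_iff,
      AddSubgroup.mem_addSubgroupOf] at h ⊢
    exact two_nsmul_mem_bRel_of_nsmul_mem (Nat.one_le_iff_ne_zero.mp hn) h

/-- For a finite group `G`, every torsion element of `𝔹_G` has order
dividing 2: if `n • α = 0` for some `n ≥ 1`, then already `2 • α = 0`. -/
theorem torsion_of_BG_is_two_torsion (G : Type*) [Group G] [Finite G]
    (α : BG G) (n : ℕ) (hn : 1 ≤ n) (h : n • α = 0) : 2 • α = 0 :=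
  torsion_of_BG_is_two_torsion_general G α n hn h
end

section
/- Let $G$ be a finite group. An element $\alpha$ of the group of singular orbit data $\mathbb{B}_G$ satisfies $2\cdot\alpha=0$ if and only if $\alpha$ can be represented by a multiset of conjugacy classes $[\hat{\gamma_1},\ldots,\hat{\gamma_q}]$ such that each $\gamma_i$ is conjugate in $G$ to $\gamma_i^{-1}$ (the empty multiset being allowed). -/
open Finsupp

/-!
Inversion is an involution `σ` of the conjugacy classes, and every generator of the relation
subgroup is `σ`-invariant; as `ℤ`-combinations are torsion free, `2 • [z] = 0` forces `z` to be
`σ`-invariant. Conversely, a `σ`-invariant `z` splits as `y + σ y + v` with `v` supported on the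
self-inverse classes (choose `y` as the part of `z` on the classes `c < σ c` for some linear
order); `y + σ y` is a relation, and modulo `[γ̂, γ̂] = 0` for self-inverse `γ̂` only the
classes with odd coefficient in `v` survive.
-/

theorem Finsupp.exists_eq_add_mapDomain_add_filter {α M : Type*} [DecidableEq α]
    [AddCommMonoid M] {σ : α → α} (hσ : Function.Involutive σ) {x : α →₀ M}
    (hx : x.mapDomain σ = x) :
    ∃ y : α →₀ M, x = y + y.mapDomain σ + x.filter (fun a => σ a = a) := by
  classical
  let _ : LinearOrder α := linearOrderOfSTO WellOrderingRel
  have mapDomain_apply_eq (y : α →₀ M) (a : α) : y.mapDomain σ a = y (σ a) := by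
    rw [← mapDomain_apply hσ.injective y (σ a), hσ a]
  have hxσ (a : α) : x (σ a) = x a := by rw [← mapDomain_apply_eq, hx]
  refine ⟨x.filter (fun a => a < σ a), ext fun a => ?_⟩
  simp only [coe_add, Pi.add_apply, mapDomain_apply_eq, filter_apply, hσ a]
  rcases lt_trichotomy a (σ a) with h | h | h
  · simp [h, h.ne', h.not_gt]
  · simp [← h]
  · simp [h, h.ne, h.not_gt, hxσ]

theorem IsConj.inv {G : Type*} [Group G] {a b : G} (h : IsConj a b) : IsConj a⁻¹ b⁻¹ := by
  obtain ⟨c, rfl⟩ := isConj_iff.1 h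
  exact isConj_iff.2 ⟨c, conj_inv.symm⟩

namespace ConjClasses

variable {G : Type*} [Group G]

instance : InvolutiveInv (ConjClasses G) where
  inv := Quotient.map (·⁻¹) fun _ _ => IsConj.inv
  inv_inv c := c.inductionOn fun a => congrArg ConjClasses.mk (inv_inv a)

@[simp] theorem inv_mk_s2 (a : G) : (ConjClasses.mk a)⁻¹ = ConjClasses.mk a⁻¹ := rfl

theorem inv_mk_eq_mk_iff {a : G} : (ConjClasses.mk a)⁻¹ = ConjClasses.mk a ↔ IsConj a a⁻¹ := by
  rw [inv_mk_s2, ConjClasses.mk_eq_mk_iff_isConj, isConj_comm]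

end ConjClasses

section SingularOrbitData

variable {G : Type*} [Group G]

@[simp] theorem bdatum_nil : bdatum G [] = 0 := rfl

@[simp] theorem bdatum_cons (a : G) (l : List G) :
    bdatum G (a :: l) = single (ConjClasses.mk a) 1 + bdatum G l := by
  simp [bdatum]

theorem bdatum_append (l l' : List G) : bdatum G (l ++ l') = bdatum G l + bdatum G l' := by
  simp [bdatum]

theorem single_add_single_inv_mem_bRel (c : ConjClasses G) (k : ℤ) :
    single c k + single c⁻¹ k ∈ bRel G := by
  obtain ⟨γ, rfl⟩ := ConjClasses.mk_surjective c
  have hpair : single (ConjClasses.mk γ) 1 + single (ConjClasses.mk γ⁻¹) 1 ∈ bRel G :=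
    AddSubgroup.subset_closure (Set.mem_insert_of_mem _ ⟨γ, rfl⟩)
  simpa [smul_add] using zsmul_mem hpair k

theorem mapDomain_inv_add_mem_bRel (x : ConjClasses G →₀ ℤ) :
    x.mapDomain Inv.inv + x ∈ bRel G := by
  induction x using Finsupp.induction_linear with
  | zero => simp
  | add x y hx hy => simpa [mapDomain_add, add_add_add_comm] using add_mem hx hy
  | single c k => simpa [mapDomain_single, add_comm] using single_add_single_inv_mem_bRel c k

theorem single_mem_bRel_of_inv_eq {c : ConjClasses G} (hc : c⁻¹ = c) (k : ℤ) :
    single c (2 * k) ∈ bRel G := by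
  simpa [hc, two_mul] using single_add_single_inv_mem_bRel c k

theorem mapDomain_inv_eq_of_mem_bRel {x : ConjClasses G →₀ ℤ} (hx : x ∈ bRel G) :
    x.mapDomain Inv.inv = x := by
  refine AddMonoidHom.eqOn_closure (f := mapDomain.addMonoidHom Inv.inv)
    (g := AddMonoidHom.id _) ?_ hx
  rintro x (rfl | ⟨γ, rfl⟩)
  · simp
  · simp [mapDomain_add, add_comm]

theorem mapDomain_inv_eq_of_add_self_mem_bRel {x : ConjClasses G →₀ ℤ} (hx : x + x ∈ bRel G) :
    x.mapDomain Inv.inv = x := by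
  have h := mapDomain_inv_eq_of_mem_bRel hx
  rw [mapDomain_add, ← two_nsmul, ← two_nsmul] at h
  exact nsmul_right_injective two_ne_zero h

theorem bRel_le_lambdaKer : bRel G ≤ lambdaKer G := by
  refine (AddSubgroup.closure_le _).2 ?_
  rintro x (rfl | ⟨γ, rfl⟩) <;> simp [lambdaKer]

theorem bdatum_add_self_mem_bRel {l : List G} (hl : ∀ γ ∈ l, IsConj γ γ⁻¹) :
    bdatum G l + bdatum G l ∈ bRel G := by
  have hinv : (bdatum G l).mapDomain Inv.inv = bdatum G l := by
    induction l with
    | nil => simp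
    | cons a l ih =>
      have ha : ConjClasses.mk a⁻¹ = ConjClasses.mk a :=
        ConjClasses.mk_eq_mk_iff_isConj.2 (hl a List.mem_cons_self).symm
      simp [mapDomain_add, ha, ih fun γ hγ => hl γ (List.mem_cons_of_mem a hγ)]
  simpa [hinv] using mapDomain_inv_add_mem_bRel (bdatum G l)

variable (G) in
def selfInverseRepresentable : AddSubmonoid (ConjClasses G →₀ ℤ) where
  carrier := {x | ∃ l : List G, (∀ γ ∈ l, IsConj γ γ⁻¹) ∧ x - bdatum G l ∈ bRel G}
  zero_mem' := ⟨[], by simp, by simp⟩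
  add_mem' := by
    rintro x y ⟨l, hl, hx⟩ ⟨l', hl', hy⟩
    refine ⟨l ++ l', List.forall_mem_append.2 ⟨hl, hl'⟩, ?_⟩
    simpa [bdatum_append, add_sub_add_comm] using add_mem hx hy

theorem mem_selfInverseRepresentable_of_mem_bRel {x : ConjClasses G →₀ ℤ} (hx : x ∈ bRel G) :
    x ∈ selfInverseRepresentable G :=
  ⟨[], by simp, by simpa using hx⟩

theorem single_mem_selfInverseRepresentable {c : ConjClasses G} (hc : c⁻¹ = c) (k : ℤ) :
    single c k ∈ selfInverseRepresentable G := by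
  obtain ⟨γ, rfl⟩ := ConjClasses.mk_surjective c
  obtain ⟨m, rfl | rfl⟩ := Int.even_or_odd' k
  · exact mem_selfInverseRepresentable_of_mem_bRel (single_mem_bRel_of_inv_eq hc m)
  · refine ⟨[γ], List.forall_mem_singleton.2 (ConjClasses.inv_mk_eq_mk_iff.1 hc), ?_⟩
    simpa [single_add] using single_mem_bRel_of_inv_eq hc m

theorem filter_mem_selfInverseRepresentable [DecidableEq (ConjClasses G)]
    (x : ConjClasses G →₀ ℤ) :
    x.filter (fun c => c⁻¹ = c) ∈ selfInverseRepresentable G := by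
  induction x using Finsupp.induction_linear with
  | zero => rw [filter_zero]; exact zero_mem _
  | add x y hx hy => rw [filter_add]; exact add_mem hx hy
  | single c k =>
    by_cases hc : c⁻¹ = c
    · rw [filter_single_of_pos (fun c => c⁻¹ = c) hc]
      exact single_mem_selfInverseRepresentable hc k
    · rw [filter_single_of_neg (fun c => c⁻¹ = c) hc]
      exact zero_mem _

theorem mem_selfInverseRepresentable_of_mapDomain_inv_eq {x : ConjClasses G →₀ ℤ}
    (hx : x.mapDomain Inv.inv = x) : x ∈ selfInverseRepresentable G := by
  classical
  obtain ⟨y, hy⟩ := exists_eq_add_mapDomain_add_filter inv_involutive hx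
  rw [hy, add_comm y]
  exact add_mem (mem_selfInverseRepresentable_of_mem_bRel (mapDomain_inv_add_mem_bRel y))
    (filter_mem_selfInverseRepresentable x)

theorem mk_eq_zero_iff_mem_bRel (z : lambdaKer G) :
    (QuotientAddGroup.mk z : BG G) = 0 ↔ (z : ConjClasses G →₀ ℤ) ∈ bRel G := by
  rw [QuotientAddGroup.eq_zero_iff, AddSubgroup.mem_addSubgroupOf]

theorem mk_eq_bmk_iff (z : lambdaKer G) {l : List G} (h : bdatum G l ∈ lambdaKer G) :
    QuotientAddGroup.mk z = bmk l h ↔ (z : ConjClasses G →₀ ℤ) - bdatum G l ∈ bRel G := by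
  rw [bmk, ← sub_eq_zero, ← QuotientAddGroup.mk_sub, mk_eq_zero_iff_mem_bRel]
  rfl

end SingularOrbitData

theorem two_torsion_iff_self_inverse_classes_general (G : Type*) [Group G] (α : BG G) :
    2 • α = 0 ↔
      ∃ (l : List G) (h : bdatum G l ∈ lambdaKer G),
        (∀ γ ∈ l, IsConj γ γ⁻¹) ∧ bmk l h = α := by
  constructor
  · induction α using QuotientAddGroup.induction_on with | H z => ?_
    intro h2
    rw [← QuotientAddGroup.mk_nsmul, mk_eq_zero_iff_mem_bRel, two_nsmul] at h2
    obtain ⟨l, hl, hz⟩ :=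
      mem_selfInverseRepresentable_of_mapDomain_inv_eq (mapDomain_inv_eq_of_add_self_mem_bRel h2)
    have hlk : bdatum G l ∈ lambdaKer G := by
      simpa using sub_mem z.2 (bRel_le_lambdaKer hz)
    exact ⟨l, hlk, hl, ((mk_eq_bmk_iff z hlk).2 hz).symm⟩
  · rintro ⟨l, h, hl, rfl⟩
    rw [bmk, ← QuotientAddGroup.mk_nsmul, mk_eq_zero_iff_mem_bRel, two_nsmul]
    exact bdatum_add_self_mem_bRel hl

/-- An element `α ∈ 𝔹_G` satisfies `2 • α = 0` iff it can be represented
by a multiset of conjugacy classes `[γ̂₁, …, γ̂_q]` such that each `γᵢ` is conjugate to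
`γᵢ⁻¹` (the empty multiset being allowed). -/
theorem two_torsion_iff_self_inverse_classes (G : Type*) [Group G] [Finite G] (α : BG G) :
    2 • α = 0 ↔
      ∃ (l : List G) (h : bdatum G l ∈ lambdaKer G),
        (∀ γ ∈ l, IsConj γ γ⁻¹) ∧ bmk l h = α :=
  two_torsion_iff_self_inverse_classes_general G α
end

section
/- Let $G$ be a finite abelian group which contains no subgroup isomorphic to $\mathbb{Z}/2\mathbb{Z}\times\mathbb{Z}/2\mathbb{Z}$. Then the group of singular orbit data $\mathbb{B}_G$ is torsion-free. -/
open Finsupp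

section Aux
variable {G : Type*} [CommGroup G]

lemma cc_mk_eq_mk {a b : G} : ConjClasses.mk a = ConjClasses.mk b ↔ a = b :=
  ConjClasses.mk_injective.eq_iff

open Classical in
lemma single_mk_apply_mk (a b : G) (k : ℤ) :
    (Finsupp.single (ConjClasses.mk a) k) (ConjClasses.mk b) = if a = b then k else 0 := by
  rw [Finsupp.single_apply]
  simp only [cc_mk_eq_mk]

/-- The subgroup of symmetric finsupps with even values on involutions. -/
noncomputable def symEven (G : Type*) [CommGroup G] : AddSubgroup (ConjClasses G →₀ ℤ) where
  carrier := {y | (∀ γ : G, y (ConjClasses.mk γ) = y (ConjClasses.mk γ⁻¹)) ∧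
    ∀ γ : G, γ * γ = 1 → γ ≠ 1 → (2:ℤ) ∣ y (ConjClasses.mk γ)}
  zero_mem' := ⟨fun _ => rfl, fun _ _ _ => ⟨0, rfl⟩⟩
  add_mem' := fun ha hb => ⟨fun γ => by simp [ha.1 γ, hb.1 γ],
    fun γ h h1 => dvd_add (ha.2 γ h h1) (hb.2 γ h h1)⟩
  neg_mem' := fun ha => ⟨fun γ => by simp [ha.1 γ], fun γ h h1 => (ha.2 γ h h1).neg_right⟩

lemma mem_symEven {y : ConjClasses G →₀ ℤ} :
    y ∈ symEven G ↔ (∀ γ : G, y (ConjClasses.mk γ) = y (ConjClasses.mk γ⁻¹)) ∧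
      ∀ γ : G, γ * γ = 1 → γ ≠ 1 → (2:ℤ) ∣ y (ConjClasses.mk γ) := Iff.rfl

lemma single_one_mem_symEven : Finsupp.single (ConjClasses.mk (1:G)) 1 ∈ symEven G := by
  constructor
  · intro γ
    simp only [single_mk_apply_mk]
    rw [show ((1:G) = γ⁻¹) ↔ ((1:G) = γ) from by rw [eq_comm, inv_eq_one, eq_comm]]
  · intro γ h h1
    rw [single_mk_apply_mk, if_neg (fun hh => h1 hh.symm)]
    exact dvd_zero 2

lemma pair_mem_symEven (δ : G) :
    Finsupp.single (ConjClasses.mk δ) 1 + Finsupp.single (ConjClasses.mk δ⁻¹) 1 ∈ symEven G := by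
  constructor
  · intro γ
    simp only [Finsupp.add_apply, single_mk_apply_mk]
    rw [show (δ = γ⁻¹) ↔ (δ⁻¹ = γ) from inv_eq_iff_eq_inv.symm,
      show (δ⁻¹ = γ⁻¹) ↔ (δ = γ) from inv_inj]
    exact add_comm _ _
  · intro γ h h1
    have hγ : γ⁻¹ = γ := inv_eq_of_mul_eq_one_left h
    simp only [Finsupp.add_apply, single_mk_apply_mk]
    rw [show (δ⁻¹ = γ) ↔ (δ = γ) from by rw [inv_eq_iff_eq_inv, hγ]]
    by_cases h2 : δ = γ <;> simp [h2]

lemma bRel_le_symEven : bRel G ≤ symEven G := by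
  rw [bRel, AddSubgroup.closure_le]
  rintro x (rfl | ⟨γ, rfl⟩)
  · exact single_one_mem_symEven
  · exact pair_mem_symEven γ

lemma single_one_smul_mem_bRel (k : ℤ) :
    Finsupp.single (ConjClasses.mk (1:G)) k ∈ bRel G := by
  have h : Finsupp.single (ConjClasses.mk (1:G)) k
      = k • Finsupp.single (ConjClasses.mk (1:G)) 1 := by
    rw [Finsupp.smul_single, smul_eq_mul, mul_one]
  rw [h]
  exact zsmul_mem (AddSubgroup.subset_closure (Set.mem_insert _ _)) k

lemma pair_mem_bRel (γ : G) :
    Finsupp.single (ConjClasses.mk γ) 1 + Finsupp.single (ConjClasses.mk γ⁻¹) 1 ∈ bRel G :=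
  AddSubgroup.subset_closure (Set.mem_insert_of_mem _ ⟨γ, rfl⟩)

lemma ind_step [DecidableEq (ConjClasses G)] {n : ℕ} {y z : ConjClasses G →₀ ℤ} {c : ConjClasses G} (hc : c ∈ y.support)
    (hz : z ∈ bRel G) (hsub : (y - z).support ⊆ y.support.erase c)
    (ih : ∀ y', y' ∈ symEven G → y'.support.card ≤ n → y' ∈ bRel G)
    (hy : y ∈ symEven G) (hcard : y.support.card ≤ n + 1) : y ∈ bRel G := by
  classical
  have h1 : y - z ∈ symEven G := sub_mem hy (bRel_le_symEven hz)
  have h2 : (y - z).support.card ≤ n := by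
    refine le_trans (Finset.card_le_card hsub) ?_
    rw [Finset.card_erase_of_mem hc]
    omega
  have h3 : y = (y - z) + z := by abel
  rw [h3]
  exact add_mem (ih _ h1 h2) hz

lemma symEven_le_bRel : symEven G ≤ bRel G := by
  classical
  suffices h : ∀ (n : ℕ) (y : ConjClasses G →₀ ℤ), y ∈ symEven G → y.support.card ≤ n →
      y ∈ bRel G by
    intro y hy
    exact h y.support.card y hy le_rfl
  intro n
  induction n with
  | zero =>
    intro y _ hcard
    have : y.support = ∅ := Finset.card_eq_zero.mp (Nat.le_zero.mp hcard)
    have : y = 0 := Finsupp.support_eq_empty.mp this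
    rw [this]
    exact zero_mem _
  | succ n ih =>
    intro y hy hcard
    rcases eq_or_ne y 0 with rfl | hy0
    · exact zero_mem _
    obtain ⟨c, hc⟩ : ∃ c, c ∈ y.support := by
      rcases Finset.eq_empty_or_nonempty y.support with he | ⟨c, hc⟩
      · exact absurd (Finsupp.support_eq_empty.mp he) hy0
      · exact ⟨c, hc⟩
    obtain ⟨γ, rfl⟩ := ConjClasses.mk_surjective c
    by_cases hγ1 : γ = 1
    · subst hγ1
      refine ind_step hc (single_one_smul_mem_bRel (y (ConjClasses.mk 1))) ?_ ih hy hcard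
      intro d hd
      rw [Finsupp.mem_support_iff, Finsupp.sub_apply] at hd
      rw [Finset.mem_erase, Finsupp.mem_support_iff]
      by_cases hd1 : d = ConjClasses.mk (1:G)
      · subst hd1
        rw [Finsupp.single_apply, if_pos rfl, sub_self] at hd
        exact absurd rfl hd
      · rw [Finsupp.single_apply, if_neg (fun h => hd1 h.symm), sub_zero] at hd
        exact ⟨hd1, hd⟩
    by_cases hγ2 : γ * γ = 1
    · -- involution case
      obtain ⟨k, hk⟩ := hy.2 γ hγ2 hγ1
      have hinv : γ⁻¹ = γ := inv_eq_of_mul_eq_one_left hγ2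
      refine ind_step hc (zsmul_mem (pair_mem_bRel γ) k) ?_ ih hy hcard
      intro d hd
      rw [Finsupp.mem_support_iff, Finsupp.sub_apply] at hd
      rw [Finset.mem_erase, Finsupp.mem_support_iff]
      by_cases hd1 : d = ConjClasses.mk γ
      · subst hd1
        exfalso
        apply hd
        rw [Finsupp.smul_apply, Finsupp.add_apply, hinv, Finsupp.single_apply, if_pos rfl,
          smul_eq_mul, hk]
        ring
      · have hz : (k • (Finsupp.single (ConjClasses.mk γ) (1:ℤ)
            + Finsupp.single (ConjClasses.mk γ⁻¹) (1:ℤ))) d = 0 := by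
          rw [Finsupp.smul_apply, Finsupp.add_apply, hinv,
            Finsupp.single_apply, if_neg (fun h => hd1 h.symm)]
          simp
        rw [hz, sub_zero] at hd
        exact ⟨hd1, hd⟩
    · -- generic case
      have hne : ConjClasses.mk γ ≠ ConjClasses.mk γ⁻¹ := by
        rw [Ne, cc_mk_eq_mk]
        intro h
        exact hγ2 (mul_eq_one_iff_eq_inv.mpr h)
      refine ind_step hc (zsmul_mem (pair_mem_bRel γ) (y (ConjClasses.mk γ))) ?_ ih hy hcard
      intro d hd
      rw [Finsupp.mem_support_iff, Finsupp.sub_apply] at hd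
      rw [Finset.mem_erase, Finsupp.mem_support_iff]
      by_cases hd1 : d = ConjClasses.mk γ
      · subst hd1
        rw [Finsupp.smul_apply, Finsupp.add_apply, Finsupp.single_apply, if_pos rfl,
          Finsupp.single_apply, if_neg hne.symm, add_zero, smul_eq_mul, mul_one, sub_self] at hd
        exact absurd rfl hd
      by_cases hd2 : d = ConjClasses.mk γ⁻¹
      · subst hd2
        rw [Finsupp.smul_apply, Finsupp.add_apply, Finsupp.single_apply, if_neg hne,
          Finsupp.single_apply, if_pos rfl, zero_add, smul_eq_mul, mul_one, ← hy.1 γ,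
          sub_self] at hd
        exact absurd rfl hd
      · have hz : ((y (ConjClasses.mk γ)) • (Finsupp.single (ConjClasses.mk γ) (1:ℤ)
            + Finsupp.single (ConjClasses.mk γ⁻¹) (1:ℤ))) d = 0 := by
          rw [Finsupp.smul_apply, Finsupp.add_apply, Finsupp.single_apply,
            if_neg (fun h => hd1 h.symm), Finsupp.single_apply, if_neg (fun h => hd2 h.symm)]
          simp
        rw [hz, sub_zero] at hd
        exact ⟨hd1, hd⟩

lemma bRel_eq_symEven : bRel G = symEven G :=
  le_antisymm bRel_le_symEven symEven_le_bRel

end Aux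


section Klein0
variable {G : Type*} [CommGroup G]
lemma unique_inv_aux {i j : G} (hi : i * i = 1) (hj : j * j = 1) (h : i * j = 1) : i = j := by
  have : j⁻¹ = j := inv_eq_of_mul_eq_one_left hj
  rw [← this]
  exact eq_inv_of_mul_eq_one_left h
end Klein0

section Klein
variable {G : Type*} [CommGroup G]

lemma pow_mod_two_eq {a : G} (ha : a * a = 1) (m : ℕ) : a ^ (m % 2) = a ^ m := by
  conv_rhs => rw [← Nat.div_add_mod m 2]
  rw [pow_add, pow_mul, show a ^ 2 = 1 from by rw [pow_two, ha], one_pow, one_mul]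

lemma unique_involution
    (hG : ∀ H : Subgroup G, ¬ Nonempty (H ≃* Multiplicative (ZMod 2 × ZMod 2)))
    {i j : G} (hi : i * i = 1) (hj : j * j = 1) (hi1 : i ≠ 1) (hj1 : j ≠ 1) : i = j := by
  by_contra hij
  have hval : ∀ a b : ZMod 2, (a + b).val = (a.val + b.val) % 2 := by decide
  let φ : Multiplicative (ZMod 2 × ZMod 2) →* G := MonoidHom.mk'
    (fun p => i ^ (p.toAdd.1.val) * j ^ (p.toAdd.2.val))
    (by
      intro p q
      show i ^ ((p.toAdd.1 + q.toAdd.1).val) * j ^ ((p.toAdd.2 + q.toAdd.2).val) = _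
      rw [hval, hval, pow_mod_two_eq hi, pow_mod_two_eq hj, pow_add, pow_add]
      exact mul_mul_mul_comm _ _ _ _)
  have h0 : ∀ z : Multiplicative (ZMod 2 × ZMod 2), φ z = 1 → z = 1 := by
    intro z hz
    have hcases : ∀ c : ZMod 2, c = 0 ∨ c = 1 := by decide
    have hz' : i ^ (z.toAdd.1.val) * j ^ (z.toAdd.2.val) = 1 := hz
    have hval0 : (0 : ZMod 2).val = 0 := rfl
    have hval1 : (1 : ZMod 2).val = 1 := rfl
    have hzeq : z.toAdd.1 = 0 ∧ z.toAdd.2 = 0 := by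
      rcases hcases z.toAdd.1 with h1 | h1 <;> rcases hcases z.toAdd.2 with h2 | h2 <;>
        rw [h1, h2] at hz' <;> simp [hval0, hval1] at hz'
      · exact ⟨h1, h2⟩
      · exact absurd hz' hj1
      · exact absurd hz' hi1
      · exact absurd (unique_inv_aux hi hj hz') hij
    have : z.toAdd = 0 := Prod.ext hzeq.1 hzeq.2
    exact this
  have hinj : Function.Injective φ := (injective_iff_map_eq_one φ).mpr h0
  exact hG φ.range ⟨(MonoidHom.ofInjective hinj).symm⟩

end Klein


section KeyC
variable {G : Type*} [CommGroup G]

noncomputable def ccRep : ConjClasses G → G :=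
  fun c => Abelianization.equivOfComm.symm (conjToAb c)

lemma ccRep_mk (γ : G) : ccRep (ConjClasses.mk γ) = γ :=
  Abelianization.equivOfComm.symm_apply_apply γ

lemma prod_eq_one_of_mem_lambdaKer {x : ConjClasses G →₀ ℤ} (hx : x ∈ lambdaKer G) :
    ∏ c ∈ x.support, (ccRep c) ^ (x c) = 1 := by
  have h0 : degMap G x = 0 := hx
  have h1 : degMap G x = ∑ c ∈ x.support, x c • Additive.ofMul (conjToAb c) := by
    rw [degMap, Finsupp.liftAddHom_apply]
    rfl
  have h2 : (∏ c ∈ x.support, conjToAb c ^ (x c)) = (1 : Abelianization G) := by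
    have := h1.symm.trans h0
    have h3 : Additive.toMul (∑ c ∈ x.support, x c • Additive.ofMul (conjToAb c))
        = ∏ c ∈ x.support, conjToAb c ^ (x c) := by
      rw [toMul_sum]
      exact Finset.prod_congr rfl fun c _ => by rw [toMul_zsmul, toMul_ofMul]
    rw [← h3, this]
    rfl
  calc ∏ c ∈ x.support, (ccRep c) ^ (x c)
      = Abelianization.equivOfComm.symm (∏ c ∈ x.support, conjToAb c ^ (x c)) := by
        rw [map_prod]
        exact Finset.prod_congr rfl fun c _ => by rw [map_zpow]; rfl
    _ = 1 := by rw [h2, map_one]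

lemma even_of_mem_lambdaKer_of_symm
    (hone : ∀ γ : G, γ * γ = 1 → γ ≠ 1 → ∀ δ : G, δ * δ = 1 → δ ≠ 1 → γ = δ)
    {x : ConjClasses G →₀ ℤ} (hx : x ∈ lambdaKer G)
    (hsym : ∀ γ : G, x (ConjClasses.mk γ) = x (ConjClasses.mk γ⁻¹))
    {i : G} (hi : i * i = 1) (hi1 : i ≠ 1) : (2:ℤ) ∣ x (ConjClasses.mk i) := by
  classical
  by_cases hmem : ConjClasses.mk i ∈ x.support
  swap
  · rw [Finsupp.notMem_support_iff.mp hmem]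
    exact dvd_zero 2
  have hiinv : i⁻¹ = i := inv_eq_of_mul_eq_one_left hi
  set f : ConjClasses G → G := fun c => (ccRep c) ^ (x c) with hf
  set ic : ConjClasses G → ConjClasses G := fun c => ConjClasses.mk (ccRep c)⁻¹ with hic
  have hic_mk : ∀ γ : G, ic (ConjClasses.mk γ) = ConjClasses.mk γ⁻¹ := by
    intro γ; simp only [hic, ccRep_mk]
  have hic_invol : ∀ c, ic (ic c) = c := by
    intro c
    obtain ⟨γ, rfl⟩ := ConjClasses.mk_surjective c
    simp only [hic, ccRep_mk, inv_inv]
  have hsym' : ∀ c, x (ic c) = x c := by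
    intro c
    obtain ⟨γ, rfl⟩ := ConjClasses.mk_surjective c
    rw [hic_mk]
    exact (hsym γ).symm
  have hrep_ic : ∀ c, ccRep (ic c) = (ccRep c)⁻¹ := by
    intro c
    rw [hic]
    exact ccRep_mk _
  have hsplit := Finset.prod_filter_mul_prod_filter_not x.support (fun c => ic c = c) f
  have h2 : ∏ c ∈ x.support.filter (fun c => ¬ ic c = c), f c = 1 := by
    refine Finset.prod_involution (fun a _ => ic a) ?_ ?_ ?_ ?_
    · intro a ha
      rw [hf]
      simp only
      rw [hsym' a, hrep_ic a, inv_zpow, mul_inv_cancel]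
    · intro a ha _
      exact (Finset.mem_filter.mp ha).2
    · intro a ha
      rcases Finset.mem_filter.mp ha with ⟨ha1, ha2⟩
      refine Finset.mem_filter.mpr ⟨?_, ?_⟩
      · rw [Finsupp.mem_support_iff, hsym' a]
        exact Finsupp.mem_support_iff.mp ha1
      · rw [hic_invol a]
        intro hh
        exact ha2 hh.symm
    · intro a _
      exact hic_invol a
  have hs1 : x.support.filter (fun c => ic c = c) ⊆ {ConjClasses.mk (1:G), ConjClasses.mk i} := by
    intro c hcmem
    rcases Finset.mem_filter.mp hcmem with ⟨_, hfix⟩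
    obtain ⟨γ, rfl⟩ := ConjClasses.mk_surjective c
    rw [hic_mk, cc_mk_eq_mk] at hfix
    have hγγ : γ * γ = 1 := mul_eq_one_iff_eq_inv.mpr hfix.symm
    by_cases hγ1 : γ = 1
    · rw [hγ1]; exact Finset.mem_insert_self _ _
    · have : γ = i := hone γ hγγ hγ1 i hi hi1
      rw [this]
      exact Finset.mem_insert_of_mem (Finset.mem_singleton_self _)
  have hne1i : ConjClasses.mk (1:G) ≠ ConjClasses.mk i := by
    rw [Ne, cc_mk_eq_mk]
    exact fun h => hi1 h.symm
  have hprod_s1 : ∏ c ∈ x.support.filter (fun c => ic c = c), f c = i ^ (x (ConjClasses.mk i)) := by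
    rw [Finset.prod_subset hs1 ?_]
    · rw [Finset.prod_insert (by simpa using hne1i), Finset.prod_singleton, hf]
      simp only
      rw [ccRep_mk, ccRep_mk, one_zpow, one_mul]
    · intro c hc hcn
      rcases Finset.mem_insert.mp hc with rfl | hc2
      · rw [hf]; simp only; rw [ccRep_mk, one_zpow]
      · rw [Finset.mem_singleton.mp hc2] at hcn ⊢
        exfalso
        apply hcn
        refine Finset.mem_filter.mpr ⟨hmem, ?_⟩
        rw [hic_mk, hiinv]
  have htot : i ^ (x (ConjClasses.mk i)) = 1 := by
    have := prod_eq_one_of_mem_lambdaKer hx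
    rw [← hsplit, hprod_s1, h2, mul_one] at this
    exact this
  have hord : orderOf i = 2 := orderOf_eq_prime (by rw [pow_two]; exact hi) hi1
  have := orderOf_dvd_iff_zpow_eq_one.mpr htot
  rw [hord] at this
  exact_mod_cast this

end KeyC

/-- If `G` is a finite abelian group containing no subgroup isomorphic to
`ℤ/2ℤ × ℤ/2ℤ`, then `𝔹_G` is torsion-free. -/
theorem BG_torsion_free_of_no_klein_four (G : Type*) [CommGroup G] [Finite G]
    (hG : ∀ H : Subgroup G, ¬ Nonempty (H ≃* Multiplicative (ZMod 2 × ZMod 2)))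
    (α : BG G) (n : ℕ) (hn : 0 < n) (h : n • α = 0) : α = 0 := by
  revert h
  refine QuotientAddGroup.induction_on α ?_
  intro z h
  set N := (bRel G).addSubgroupOf (lambdaKer G) with hN
  have h' : (QuotientAddGroup.mk' N) (n • z) = 0 := by
    rw [map_nsmul]
    exact h
  have hmem : n • z ∈ N := by
    rw [QuotientAddGroup.mk'_apply] at h'
    exact (QuotientAddGroup.eq_zero_iff _).mp h'
  have hmem' : (n • (z : ConjClasses G →₀ ℤ)) ∈ bRel G := by
    have := AddSubgroup.mem_addSubgroupOf.mp hmem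
    simpa using this
  rw [bRel_eq_symEven] at hmem'
  have hnne : (n : ℤ) ≠ 0 := Int.natCast_ne_zero.mpr hn.ne'
  have hsym : ∀ γ : G, (z : ConjClasses G →₀ ℤ) (ConjClasses.mk γ)
      = (z : ConjClasses G →₀ ℤ) (ConjClasses.mk γ⁻¹) := by
    intro γ
    have := hmem'.1 γ
    rw [Finsupp.smul_apply, Finsupp.smul_apply, nsmul_eq_mul, nsmul_eq_mul] at this
    exact mul_left_cancel₀ hnne this
  have heven : ∀ γ : G, γ * γ = 1 → γ ≠ 1 →
      (2:ℤ) ∣ (z : ConjClasses G →₀ ℤ) (ConjClasses.mk γ) := by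
    intro γ hγ hγ1
    exact even_of_mem_lambdaKer_of_symm
      (fun a ha ha1 b hb hb1 => unique_involution hG ha hb ha1 hb1)
      z.property hsym hγ hγ1
  have hz : (z : ConjClasses G →₀ ℤ) ∈ bRel G := by
    rw [bRel_eq_symEven]
    exact ⟨hsym, heven⟩
  have : z ∈ N := AddSubgroup.mem_addSubgroupOf.mpr hz
  exact (QuotientAddGroup.eq_zero_iff _).mpr this
end

section
/- Let $p$ be an odd prime, $G=\mathbb{Z}/p\mathbb{Z}\times\mathbb{Z}/p\mathbb{Z}$, and let $G_0,\ldots,G_p$ be the $p+1$ distinct subgroups of $G$ of order $p$. Then (i) the composite $\bigoplus_j\widetilde{Res}^G_{G_j}\circ\bigoplus_j\widetilde{Ind}^G_{G_j}:\bigoplus_{j=0}^{p}\mathbb{A}_{G_j}\to\bigoplus_{j=0}^{p}\mathbb{A}_{G_j}$ is multiplication by $p$ (indeed $\widetilde{Res}^G_{G_l}\circ\widetilde{Ind}^G_{G_j}$ is multiplication by $p$ on $\mathbb{A}_{G_j}$ if $l=j$ and is the zero map if $l\neq j$), and (ii) the composite $\bigoplus_j\widetilde{Ind}^G_{G_j}\circ\bigoplus_j\widetilde{Res}^G_{G_j}:\mathbb{A}_G\to\mathbb{A}_G$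 is multiplication by $p$. -/
/-! ### Virtual characters of abelian groups, permutation characters, and the quotient
`R_ℂ G / E_G` with its conjugation involution. -/

/-- The additive group of virtual complex characters of an abelian group `G`
(`ℤ`-linear combinations of the irreducible characters, which for an abelian group are
exactly the homomorphisms `G → ℂˣ`), as a subgroup of the functions `G → ℂ`. -/
noncomputable def RCa (G : Type*) [CommGroup G] : AddSubgroup (G → ℂ) :=
  AddSubgroup.closure {f | ∃ χ : G →* ℂˣ, f = fun g => (χ g : ℂ)}

/-- The permutation character of the action of `G` on `G ⧸ H`, i.e. the character of the
representation induced from the trivial character of `H`; its value at `g` is the number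
of fixed cosets. -/
noncomputable def permChar {G : Type*} [Group G] (H : Subgroup G) : G → ℂ :=
  fun g => (Nat.card {x : G ⧸ H // g • x = x} : ℂ)

/-- The subgroup of `G → ℂ` generated by the characters induced from the trivial
character of subgroups of `G`. -/
noncomputable def EG (G : Type*) [Group G] : AddSubgroup (G → ℂ) :=
  AddSubgroup.closure {f | ∃ H : Subgroup G, f = permChar H}

/-- The quotient `R_ℂ G / E_G` of the group of virtual characters. -/
abbrev RTilde (G : Type*) [CommGroup G] :=
  (RCa G) ⧸ ((EG G).addSubgroupOf (RCa G))

/-- Pointwise complex conjugation of functions `G → ℂ`, as an additive homomorphism. -/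
def conjFun (G : Type*) : (G → ℂ) →+ (G → ℂ) where
  toFun f := fun g => starRingEnd ℂ (f g)
  map_zero' := by funext g; simp
  map_add' f₁ f₂ := by funext g; simp

lemma conjFun_RCa_le (G : Type*) [CommGroup G] : (RCa G).map (conjFun G) ≤ RCa G := by
  rw [RCa, AddMonoidHom.map_closure, AddSubgroup.closure_le]
  rintro _ ⟨f, ⟨χ, rfl⟩, rfl⟩
  apply AddSubgroup.subset_closure
  refine ⟨(Units.map ((starRingEnd ℂ) : ℂ →* ℂ)).comp χ, ?_⟩
  funext g
  simp [conjFun]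

lemma conjFun_EG_le (G : Type*) [Group G] : (EG G).map (conjFun G) ≤ EG G := by
  rw [EG, AddMonoidHom.map_closure, AddSubgroup.closure_le]
  rintro _ ⟨f, ⟨H, rfl⟩, rfl⟩
  apply AddSubgroup.subset_closure
  refine ⟨H, ?_⟩
  funext g
  simp [conjFun, permChar]

/-- The involution of `R_ℂ G / E_G` induced by complex conjugation of characters. -/
noncomputable def conjQ (G : Type*) [CommGroup G] : RTilde G →+ RTilde G :=
  QuotientAddGroup.map _ _
    (((conjFun G).comp (RCa G).subtype).codRestrict (RCa G)
      (fun x => conjFun_RCa_le G (AddSubgroup.mem_map_of_mem _ x.2)))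
    (by
      intro x hx
      rw [AddSubgroup.mem_addSubgroupOf] at hx
      rw [AddSubgroup.mem_comap, AddSubgroup.mem_addSubgroupOf]
      exact conjFun_EG_le G (AddSubgroup.mem_map_of_mem _ hx))

/-- The subgroup `𝔸_G = {a ∈ R_ℂ G / E_G : a + ā = 0}`. -/
noncomputable def AG (G : Type*) [CommGroup G] : AddSubgroup (RTilde G) :=
  (AddMonoidHom.id (RTilde G) + conjQ G).ker

lemma mem_AG_iff {G : Type*} [CommGroup G] (a : RTilde G) :
    a ∈ AG G ↔ a + conjQ G a = 0 := Iff.rfl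

/-- Restriction of a (virtual) character of `G` to a subgroup `K`, at the level of
functions. -/
def resSubFun {G : Type*} [Group G] (K : Subgroup G) (f : G → ℂ) : ↥K → ℂ :=
  fun x => f (x : G)

open scoped Classical in
/-- The character of `G` induced from a character `f` of a subgroup `K` of an abelian
group `G`: by the standard induced-character formula it vanishes off `K` and equals
`[G : K] ⬝ f` on `K`. -/
noncomputable def indSubFun {G : Type*} [CommGroup G] (K : Subgroup G) (f : ↥K → ℂ) :
    G → ℂ :=
  fun g => (Nat.card (G ⧸ K) : ℂ) * (if h : g ∈ K then f ⟨g, h⟩ else 0)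

/-- `R` is the homomorphism `R_ℂ G / E_G → R_ℂ K / E_K` induced by restriction of
characters. -/
def IsResSub {G : Type*} [CommGroup G] (K : Subgroup G)
    (R : RTilde G →+ RTilde ↥K) : Prop :=
  ∀ (r : RCa G) (r' : RCa ↥K),
    (r' : ↥K → ℂ) = resSubFun K (r : G → ℂ) →
      R (QuotientAddGroup.mk r) = QuotientAddGroup.mk r'

/-- `I` is the homomorphism `R_ℂ K / E_K → R_ℂ G / E_G` induced by induction of
characters. -/
def IsIndSub {G : Type*} [CommGroup G] (K : Subgroup G)
    (I : RTilde ↥K →+ RTilde G) : Prop :=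
  ∀ (r' : RCa ↥K) (r : RCa G),
    (r : G → ℂ) = indSubFun K (r' : ↥K → ℂ) →
      I (QuotientAddGroup.mk r') = QuotientAddGroup.mk r


/-!
Induction from a subgroup `K` of a finite abelian group `G` is `[G : K]` times the function on
`K`, extended by zero. It takes characters to virtual characters: if `ψ` extends a character `χ`
of `K`, the extensions of `χ` are the `ψ μ` with `μ` a character of `G ⧸ K`, and their sum is
`Ind χ` by orthogonality.

The `p + 1` subgroups of order `p` of `(ℤ/p)²` meet pairwise trivially, so counting shows that
they cover the group. Hence `Res_l (Ind_j f)` is `p f` for `l = j` and is supported at `1` for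
`l ≠ j`, and `∑ⱼ Ind_j (Res_j f)` differs from `p f` only at `1`. A virtual character takes an
integer value `n` at `1`, so each such difference is `n` times the regular character, which is
the permutation character of `G ⧸ ⊥` and hence lies in `E`.
-/

open Finset

section Subgroups

variable {G : Type*} [Group G]

lemma Subgroup.disjoint_of_card_eq_prime {p : ℕ} (hp : p.Prime) {K L : Subgroup G}
    (hK : Nat.card K = p) (hL : Nat.card L = p) (hKL : K ≠ L) : Disjoint K L := by
  have : Finite K := Nat.finite_of_card_ne_zero (hK ▸ hp.ne_zero)
  have : Finite L := Nat.finite_of_card_ne_zero (hL ▸ hp.ne_zero)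
  have hdvd : Nat.card ↥(K ⊓ L) ∣ p := hK ▸ Subgroup.card_dvd_of_le inf_le_left
  rcases hp.eq_one_or_self_of_dvd _ hdvd with h | h
  · exact disjoint_iff.mpr (Subgroup.card_eq_one.mp h)
  · have hKinf := Subgroup.eq_of_le_of_card_ge inf_le_left (hK.trans h.symm).le
    have hLinf := Subgroup.eq_of_le_of_card_ge inf_le_right (hL.trans h.symm).le
    exact absurd (hKinf.symm.trans hLinf) hKL

lemma Subgroup.exists_mem_of_pairwise_disjoint_of_card_le {ι : Type*} [Fintype ι] [Finite G]
    {K : ι → Subgroup G}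
    (hdisj : Pairwise fun i j => Disjoint (K i) (K j))
    (hcard : Nat.card G ≤ ∑ i, (Nat.card (K i) - 1) + 1) {g : G} (hg : g ≠ 1) :
    ∃ i, g ∈ K i := by
  classical
  have := Fintype.ofFinite G
  let S : ι → Finset G := fun i => (univ.filter (· ∈ K i)).erase 1
  have hS : ∀ i, #(S i) = Nat.card (K i) - 1 := fun i => by
    rw [card_erase_of_mem (by simp), Nat.card_eq_fintype_card, Fintype.card_subtype]
  have hSdisj : ((univ : Finset ι) : Set ι).PairwiseDisjoint S := fun i _ j _ hij =>
    disjoint_left.mpr fun x hxi hxj => (mem_erase.mp hxi).1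
      (Subgroup.disjoint_def.mp (hdisj hij) (mem_filter.mp (mem_erase.mp hxi).2).2
        (mem_filter.mp (mem_erase.mp hxj).2).2)
  have hunion : univ.biUnion S = univ.erase 1 := by
    refine eq_of_subset_of_card_le (fun x hx => ?_) ?_
    · obtain ⟨i, -, hx⟩ := mem_biUnion.mp hx
      exact mem_erase.mpr ⟨(mem_erase.mp hx).1, mem_univ x⟩
    · rw [card_biUnion hSdisj, card_erase_of_mem (mem_univ _), card_univ,
        ← Nat.card_eq_fintype_card]
      simp only [hS]
      omega
  obtain ⟨i, -, hi⟩ := mem_biUnion.mp (hunion ▸ mem_erase.mpr ⟨hg, mem_univ g⟩)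
  exact ⟨i, (mem_filter.mp (mem_erase.mp hi).2).2⟩

end Subgroups

section Characters

variable {G : Type*} [CommGroup G]

lemma RCa_apply_one {f : G → ℂ} (hf : f ∈ RCa G) : ∃ n : ℤ, f 1 = n := by
  induction hf using AddSubgroup.closure_induction with
  | mem f hf => obtain ⟨χ, rfl⟩ := hf; exact ⟨1, by simp⟩
  | zero => exact ⟨0, by simp⟩
  | add f g _ _ hf hg =>
    obtain ⟨m, hm⟩ := hf
    obtain ⟨n, hn⟩ := hg
    exact ⟨m + n, by simp [hm, hn]⟩
  | neg f _ hf => obtain ⟨n, hn⟩ := hf; exact ⟨-n, by simp [hn]⟩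

lemma resSubFun_mem_RCa (K : Subgroup G) {f : G → ℂ} (hf : f ∈ RCa G) :
    resSubFun K f ∈ RCa K := by
  induction hf using AddSubgroup.closure_induction with
  | mem f hf =>
    obtain ⟨χ, rfl⟩ := hf
    exact AddSubgroup.subset_closure ⟨χ.comp K.subtype, rfl⟩
  | zero => exact zero_mem _
  | add f g _ _ hf hg => exact add_mem hf hg
  | neg f _ hf => exact neg_mem hf

lemma indSubFun_apply_of_mem (K : Subgroup G) (f : K → ℂ) {g : G} (hg : g ∈ K) :
    indSubFun K f g = K.index * f ⟨g, hg⟩ := by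
  simp [indSubFun, hg, Subgroup.index]

lemma indSubFun_apply_of_notMem (K : Subgroup G) (f : K → ℂ) {g : G} (hg : g ∉ K) :
    indSubFun K f g = 0 := by
  simp [indSubFun, hg]

noncomputable def indSubHom (K : Subgroup G) : (K → ℂ) →+ (G → ℂ) where
  toFun := indSubFun K
  map_zero' := by funext g; simp [indSubFun]
  map_add' f₁ f₂ := by
    funext g
    by_cases hg : g ∈ K <;> simp [indSubFun, hg, mul_add]

lemma sum_monoidHom_apply_eq_ite {A : Type*} [CommGroup A] [Finite A] [Fintype (A →* ℂˣ)]
    [DecidableEq A] (a : A) :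
    ∑ φ : A →* ℂˣ, (φ a : ℂ) = if a = 1 then (Nat.card A : ℂ) else 0 := by
  classical
  let ev : (A →* ℂˣ) →* ℂ :=
    { toFun φ := φ a, map_one' := rfl, map_mul' φ ψ := by simp }
  have hev : ev = 1 ↔ a = 1 := by
    refine Iff.trans ?_ (CommGroup.forall_apply_eq_apply_iff A (M := ℂ))
    simp [DFunLike.ext_iff, ev, Units.val_eq_one]
  have := sum_hom_units ev
  simp only [hev] at this
  rw [← Nat.card_eq_fintype_card, CommGroup.card_monoidHom_of_hasEnoughRootsOfUnity] at this
  simpa [ev, apply_ite (Nat.cast : ℕ → ℂ)] using this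

lemma indSubFun_eq_sum [Finite G] (K : Subgroup G) [Fintype (G ⧸ K →* ℂˣ)]
    (ψ : G →* ℂˣ) :
    indSubFun K (fun k => (ψ k : ℂ)) =
      ∑ μ : G ⧸ K →* ℂˣ, fun g => ((ψ * μ.comp (QuotientGroup.mk' K)) g : ℂ) := by
  classical
  funext g
  simp only [Finset.sum_apply, MonoidHom.mul_apply, MonoidHom.comp_apply, Units.val_mul,
    ← mul_sum, QuotientGroup.mk'_apply, sum_monoidHom_apply_eq_ite,
    QuotientGroup.eq_one_iff]
  by_cases hg : g ∈ K
  · simp [indSubFun_apply_of_mem K _ hg, hg, Subgroup.index, mul_comm]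
  · simp [indSubFun_apply_of_notMem K _ hg, hg]

lemma indSubFun_mem_RCa [Finite G] (K : Subgroup G) {f : K → ℂ} (hf : f ∈ RCa K) :
    indSubFun K f ∈ RCa G := by
  suffices RCa K ≤ (RCa G).comap (indSubHom K) from this hf
  refine (AddSubgroup.closure_le _).mpr ?_
  rintro _ ⟨χ, rfl⟩
  obtain ⟨ψ, rfl⟩ := MonoidHom.domRestrict_surjective ℂ K χ
  have := Fintype.ofFinite (G ⧸ K →* ℂˣ)
  show indSubFun K (fun k => (ψ k : ℂ)) ∈ RCa G
  rw [indSubFun_eq_sum]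
  exact sum_mem fun μ _ => AddSubgroup.subset_closure ⟨_, rfl⟩

open scoped Classical in
lemma permChar_apply (H : Subgroup G) (g : G) :
    permChar H g = if g ∈ H then (H.index : ℂ) else 0 := by
  have hfix : ∀ x : G ⧸ H, g • x = x ↔ g ∈ H := by
    rintro ⟨z⟩
    change ((g * z : G) : G ⧸ H) = z ↔ _
    rw [QuotientGroup.eq, mul_inv_rev, mul_comm z⁻¹, inv_mul_cancel_right, inv_mem_iff]
  by_cases hg : g ∈ H <;> simp [permChar, hfix, hg, Subgroup.index]

open scoped Classical in
lemma permChar_bot_apply (g : G) :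
    permChar (⊥ : Subgroup G) g = if g = 1 then (Nat.card G : ℂ) else 0 := by
  simp [permChar_apply, Subgroup.index_bot]

lemma permChar_mem_EG (H : Subgroup G) : permChar H ∈ EG G :=
  AddSubgroup.subset_closure ⟨H, rfl⟩

lemma resSubFun_indSubFun_self (K : Subgroup G) (f : K → ℂ) :
    resSubFun K (indSubFun K f) = K.index • f := by
  funext x
  simp [resSubFun, indSubFun_apply_of_mem K f x.2]

open scoped Classical in
lemma resSubFun_indSubFun_of_disjoint {K L : Subgroup G} (hKL : Disjoint K L) (f : K → ℂ) :
    resSubFun L (indSubFun K f) = fun x => if x = 1 then K.index * f 1 else 0 := by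
  funext x
  by_cases hx : (x : G) ∈ K
  · obtain rfl : x = 1 := Subtype.ext (Subgroup.disjoint_def.mp hKL hx x.2)
    simp only [resSubFun, indSubFun_apply_of_mem K f K.one_mem, OneMemClass.coe_one, if_pos]
    rfl
  · have hx1 : x ≠ 1 := by rintro rfl; exact hx K.one_mem
    simp [resSubFun, indSubFun_apply_of_notMem K f hx, hx1]

open scoped Classical in
lemma sum_indSubFun_resSubFun_apply {ι : Type*} [Fintype ι] {K : ι → Subgroup G}
    (hdisj : Pairwise fun i j => Disjoint (K i) (K j)) (hcover : ∀ g ≠ 1, ∃ i, g ∈ K i)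
    {m : ℕ} (hindex : ∀ i, (K i).index = m) (f : G → ℂ) (g : G) :
    ∑ i, indSubFun (K i) (resSubFun (K i) f) g =
      if g = 1 then Fintype.card ι * m * f 1 else m * f g := by
  have hterm : ∀ i, indSubFun (K i) (resSubFun (K i) f) g = if g ∈ K i then m * f g else 0 := by
    intro i
    by_cases hg : g ∈ K i
    · simp [indSubFun_apply_of_mem _ _ hg, hg, hindex, resSubFun]
    · simp [indSubFun_apply_of_notMem _ _ hg, hg]
  simp only [hterm]
  split_ifs with hg
  · subst hg
    simp [mul_assoc]
  · obtain ⟨i, hi⟩ := hcover g hg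
    rw [sum_eq_single i (fun j _ hji => if_neg fun hj =>
      hg (Subgroup.disjoint_def.mp (hdisj hji) hj hi)) (by simp), if_pos hi]

lemma IsResSub.map_mk {K : Subgroup G} {R : RTilde G →+ RTilde K} (hR : IsResSub K R)
    (r : RCa G) :
    R (QuotientAddGroup.mk r) = QuotientAddGroup.mk ⟨resSubFun K r, resSubFun_mem_RCa K r.2⟩ :=
  hR _ _ rfl

lemma IsIndSub.map_mk [Finite G] {K : Subgroup G} {I : RTilde K →+ RTilde G}
    (hI : IsIndSub K I) (r : RCa K) :
    I (QuotientAddGroup.mk r) = QuotientAddGroup.mk ⟨indSubFun K r, indSubFun_mem_RCa K r.2⟩ :=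
  hI _ _ rfl

lemma RTilde.mk_eq_mk_of_sub_mem {a b : RCa G} (h : (a : G → ℂ) - b ∈ EG G) :
    (QuotientAddGroup.mk a : RTilde G) = QuotientAddGroup.mk b := by
  rw [QuotientAddGroup.eq, AddSubgroup.mem_addSubgroupOf]
  simpa [neg_add_eq_sub] using neg_mem h

lemma RTilde.mk_eq_zero_of_mem {a : RCa G} (h : (a : G → ℂ) ∈ EG G) :
    (QuotientAddGroup.mk a : RTilde G) = 0 := by
  rwa [QuotientAddGroup.eq_zero_iff, AddSubgroup.mem_addSubgroupOf]

end Characters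

theorem res_ind_multiplication_by_p_general (p : ℕ) (hp : p.Prime)
    (Gsub : Fin (p + 1) → Subgroup (Multiplicative (ZMod p × ZMod p)))
    (hinj : Function.Injective Gsub)
    (hcard : ∀ j, Nat.card (Gsub j) = p)
    (Res : ∀ j, RTilde (Multiplicative (ZMod p × ZMod p)) →+ RTilde ↥(Gsub j))
    (Ind : ∀ j, RTilde ↥(Gsub j) →+ RTilde (Multiplicative (ZMod p × ZMod p)))
    (hRes : ∀ j, IsResSub (Gsub j) (Res j))
    (hInd : ∀ j, IsIndSub (Gsub j) (Ind j)) :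
    (∀ j, ∀ a ∈ AG ↥(Gsub j), Res j (Ind j a) = p • a) ∧
    (∀ j l, j ≠ l → ∀ a ∈ AG ↥(Gsub j), Res l (Ind j a) = 0) ∧
    (∀ b ∈ AG (Multiplicative (ZMod p × ZMod p)), ∑ j, Ind j (Res j b) = p • b) := by
  have : Fact p.Prime := ⟨hp⟩
  have hcardG : Nat.card (Multiplicative (ZMod p × ZMod p)) = p * p := by simp
  have hindex (j) : (Gsub j).index = p := by
    have := (Gsub j).card_mul_index
    rw [hcard, hcardG] at this
    exact Nat.eq_of_mul_eq_mul_left hp.pos this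
  have hdisj : Pairwise fun j l => Disjoint (Gsub j) (Gsub l) := fun j l hjl =>
    Subgroup.disjoint_of_card_eq_prime hp (hcard j) (hcard l) (hinj.ne hjl)
  have hcover (g) (hg : g ≠ 1) : ∃ j, g ∈ Gsub j := by
    refine Subgroup.exists_mem_of_pairwise_disjoint_of_card_le hdisj ?_ hg
    obtain ⟨k, rfl⟩ := Nat.exists_eq_add_one.mpr hp.pos
    simp only [hcard, hcardG, sum_const, card_univ, Fintype.card_fin,
      smul_eq_mul, Nat.add_sub_cancel]
    nlinarith
  refine ⟨?_, ?_, ?_⟩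
  · rintro j a -
    obtain ⟨r, rfl⟩ := QuotientAddGroup.mk_surjective a
    rw [(hInd j).map_mk, (hRes j).map_mk, ← QuotientAddGroup.mk_nsmul]
    congr 1
    ext1
    simp [resSubFun_indSubFun_self, hindex]
  · rintro j l hjl a -
    obtain ⟨r, rfl⟩ := QuotientAddGroup.mk_surjective a
    obtain ⟨n, hn⟩ := RCa_apply_one r.2
    rw [(hInd j).map_mk, (hRes l).map_mk]
    refine RTilde.mk_eq_zero_of_mem ?_
    convert zsmul_mem (permChar_mem_EG ⊥) n using 1
    funext x
    simp [resSubFun_indSubFun_of_disjoint (hdisj hjl), permChar_bot_apply, hn, hindex, hcard,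
      mul_comm]
  · rintro b -
    obtain ⟨r, rfl⟩ := QuotientAddGroup.mk_surjective b
    obtain ⟨n, hn⟩ := RCa_apply_one r.2
    simp only [(hInd _).map_mk, (hRes _).map_mk, ← QuotientAddGroup.mk_sum,
      ← QuotientAddGroup.mk_nsmul]
    refine RTilde.mk_eq_mk_of_sub_mem ?_
    convert zsmul_mem (permChar_mem_EG ⊥) n using 1
    funext g
    rcases eq_or_ne g 1 with rfl | hg
    · simp [sum_indSubFun_resSubFun_apply hdisj hcover hindex, permChar_bot_apply, hn]
      ring
    · simp [sum_indSubFun_resSubFun_apply hdisj hcover hindex, permChar_bot_apply, hg]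

/-- Let `p` be an odd prime, `G = ℤ/pℤ × ℤ/pℤ`, and `G₀, …, G_p` its
`p+1` subgroups of order `p`. Then (i) `Res_l ∘ Ind_j` is multiplication by `p` on
`𝔸_{G_j}` when `l = j` and zero when `l ≠ j` (so `⊕Res ∘ ⊕Ind` is multiplication by `p`
on `⊕_j 𝔸_{G_j}`), and (ii) `⊕Ind ∘ ⊕Res` is multiplication by `p` on `𝔸_G`. -/
theorem res_ind_multiplication_by_p (p : ℕ) (hp : p.Prime) (hodd : Odd p)
    (Gsub : Fin (p + 1) → Subgroup (Multiplicative (ZMod p × ZMod p)))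
    (hinj : Function.Injective Gsub)
    (hcard : ∀ j, Nat.card (Gsub j) = p)
    (Res : ∀ j, RTilde (Multiplicative (ZMod p × ZMod p)) →+ RTilde ↥(Gsub j))
    (Ind : ∀ j, RTilde ↥(Gsub j) →+ RTilde (Multiplicative (ZMod p × ZMod p)))
    (hRes : ∀ j, IsResSub (Gsub j) (Res j))
    (hInd : ∀ j, IsIndSub (Gsub j) (Ind j)) :
    (∀ j, ∀ a ∈ AG ↥(Gsub j), Res j (Ind j a) = p • a) ∧
    (∀ j l, j ≠ l → ∀ a ∈ AG ↥(Gsub j), Res l (Ind j a) = 0) ∧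
    (∀ b ∈ AG (Multiplicative (ZMod p × ZMod p)), ∑ j, Ind j (Res j b) = p • b) :=
  res_ind_multiplication_by_p_general p hp Gsub hinj hcard Res Ind hRes hInd
end

section
/- Let $m$ be an even positive integer and $C_m=\langle x\rangle$ the cyclic group of order $m$. Then $\mathbb{B}_{C_m}$ is a free abelian group of rank $m/2-1$, and the elements $[x,x^i,x^{m-i-1}]$ for $i=1,\ldots,m/2-1$ form a basis of $\mathbb{B}_{C_m}$. -/
open Finsupp

lemma bdatum_triple_mem {G : Type*} [Group G] (a b c : G) (h : a * b * c = 1) :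
    bdatum G [a, b, c] ∈ lambdaKer G :=
  bdatum_mem_lambdaKer_of_prod_eq_one _ (by simpa [mul_assoc] using h)

/-- The standard generator of the cyclic group of order `m`. -/
def xgen (m : ℕ) : Multiplicative (ZMod m) := Multiplicative.ofAdd 1

lemma xgen_pow_card (m : ℕ) : xgen m ^ m = 1 := by
  have : xgen m ^ m = Multiplicative.ofAdd ((m • (1 : ZMod m))) := by
    rw [ofAdd_nsmul]; rfl
  rw [this, nsmul_eq_mul, mul_one]
  simp [ZMod.natCast_self]

lemma xgen_triple_prod (m a b c : ℕ) (h : a + b + c = m) :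
    xgen m ^ a * xgen m ^ b * xgen m ^ c = 1 := by
  rw [← pow_add, ← pow_add, h, xgen_pow_card]

/-!
Put `m = 2k + 2` and write `eₐ` for the generator of `ℤ[ℤ/m]` at `a ∈ ℤ/m`. Modulo the relations
`e₀ = 0`, `e₋ₐ = -eₐ`, the proposed basis vectors are `vᵢ = e₁ + eᵢ₊₁ - eᵢ₊₂` for `0 ≤ i < k`.

They span: modulo the relations and the `vᵢ` we have `eⱼ₊₁ ≡ eⱼ + e₁`, so `eⱼ ≡ j • e₁` for
`j ≤ k + 1`, and `eₖ₊₁ = e₋₍ₖ₊₁₎` forces `m • e₁ ≡ 0`. Hence the quotient map factors through the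
degree `ℤ[ℤ/m] → ℤ/m` and kills its kernel.

They are independent: there is an odd additive map `ℤ[ℤ/m] → ℤᵏ` sending `vᵢ` to `(k + 1)` times
the `i`-th unit vector.
-/

section General

variable {G : Type*} [Group G]

lemma bdatum_triple (a b c : G) :
    bdatum G [a, b, c] = single (ConjClasses.mk a) 1 + single (ConjClasses.mk b) 1
      + single (ConjClasses.mk c) 1 := by
  simp [bdatum, add_assoc]

lemma bRel_le_ker {A : Type*} [AddCommGroup A] (L : (ConjClasses G →₀ ℤ) →+ A)
    (h_one : L (single (ConjClasses.mk 1) 1) = 0)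
    (h_inv : ∀ γ : G,
      L (single (ConjClasses.mk γ) 1) + L (single (ConjClasses.mk γ⁻¹) 1) = 0) :
    bRel G ≤ L.ker := by
  refine (AddSubgroup.closure_le _).2 ?_
  rintro x (rfl | ⟨γ, rfl⟩)
  · exact h_one
  · simpa using h_inv γ

lemma eq_zero_of_mem_lambdaKer {A : Type*} [AddCommGroup A] (L : (ConjClasses G →₀ ℤ) →+ A)
    (χ : G →* Multiplicative A) (hL : ∀ g, L (single (ConjClasses.mk g) 1) = (χ g).toAdd)
    {f : ConjClasses G →₀ ℤ} (hf : f ∈ lambdaKer G) : L f = 0 := by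
  have hfac : L = (MonoidHom.toAdditiveLeft (Abelianization.lift χ)).comp (degMap G) := by
    refine Finsupp.addHom_ext fun c z => ?_
    obtain ⟨g, rfl⟩ := ConjClasses.mk_surjective c
    rw [← smul_single_one, map_zsmul, hL, AddMonoidHom.comp_apply, map_zsmul, degMap_single,
      one_smul]
    simp
  rw [hfac, AddMonoidHom.comp_apply, show degMap G f = 0 from hf, map_zero]

variable {ι : Type*}

lemma span_range_mk_eq_top (w : ι → lambdaKer G)
    (hw : lambdaKer G ≤
      bRel G ⊔ AddSubgroup.closure (Set.range fun i => (w i : ConjClasses G →₀ ℤ))) :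
    Submodule.span ℤ (Set.range fun i => (QuotientAddGroup.mk (w i) : BG G)) = ⊤ := by
  set V := Submodule.span ℤ (Set.range fun i => (QuotientAddGroup.mk (w i) : BG G))
  have hclosure :
      AddSubgroup.closure (Set.range w) ≤ V.toAddSubgroup.comap (QuotientAddGroup.mk' _) :=
    (AddSubgroup.closure_le _).2 (by
      rintro _ ⟨i, rfl⟩
      exact Submodule.subset_span ⟨i, rfl⟩)
  refine eq_top_iff.2 fun y _ => ?_
  obtain ⟨z, rfl⟩ := QuotientAddGroup.mk_surjective y
  obtain ⟨r, hr, s, hs, hrs⟩ := AddSubgroup.mem_sup.1 (hw z.2)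
  rw [show (Set.range fun i => (w i : ConjClasses G →₀ ℤ))
      = (lambdaKer G).subtype '' Set.range w from Set.range_comp _ _,
    ← AddMonoidHom.map_closure] at hs
  obtain ⟨s', hs', rfl⟩ := hs
  have hrel : QuotientAddGroup.mk (z - s') = (0 : BG G) := by
    rw [QuotientAddGroup.eq_zero_iff, AddSubgroup.mem_addSubgroupOf]
    simpa [← hrs] using hr
  rw [← sub_add_cancel z s', QuotientAddGroup.mk_add, hrel, zero_add]
  exact hclosure hs'

lemma linearIndependent_of_map_eq_smul_single {M : Type*} [AddCommGroup M] [Fintype ι]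
    [DecidableEq ι] {v : ι → M} (L : M →+ (ι → ℤ)) {N : ℤ} (hN : N ≠ 0)
    (hL : ∀ i, L (v i) = N • Pi.single i 1) : LinearIndependent ℤ v := by
  refine Fintype.linearIndependent_iff.2 fun c hc i => ?_
  simpa [hL, Pi.single_apply, hN] using congrFun (congrArg L hc) i

lemma linearIndependent_mk [Fintype ι] [DecidableEq ι] (w : ι → lambdaKer G)
    (L : (ConjClasses G →₀ ℤ) →+ (ι → ℤ)) (hL : bRel G ≤ L.ker) {N : ℤ} (hN : N ≠ 0)
    (hLw : ∀ i, L (w i) = N • Pi.single i 1) :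
    LinearIndependent ℤ (fun i => (QuotientAddGroup.mk (w i) : BG G)) :=
  linearIndependent_of_map_eq_smul_single
    (QuotientAddGroup.lift _ (L.comp (lambdaKer G).subtype)
      fun _ hx => hL (AddSubgroup.mem_addSubgroupOf.1 hx)) hN hLw

end General

namespace EvenCyclic

open Multiplicative

variable {n : ℕ}

noncomputable def dirac (a : ZMod n) : ConjClasses (Multiplicative (ZMod n)) →₀ ℤ :=
  single (ConjClasses.mk (ofAdd a)) 1

lemma dirac_zero_mem_bRel : dirac (0 : ZMod n) ∈ bRel _ :=
  AddSubgroup.subset_closure (Set.mem_insert _ _)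

lemma dirac_add_dirac_neg_mem_bRel (a : ZMod n) : dirac a + dirac (-a) ∈ bRel _ :=
  AddSubgroup.subset_closure (Set.mem_insert_of_mem _ ⟨ofAdd a, rfl⟩)

lemma xgen_pow (j : ℕ) : xgen n ^ j = ofAdd (j : ZMod n) := by
  rw [xgen, ← ofAdd_nsmul, nsmul_one]

lemma natCast_sub_eq_neg {j : ℕ} (hj : j ≤ n) : ((n - j : ℕ) : ZMod n) = -j := by
  simp [Nat.cast_sub hj]

lemma exists_natCast_eq_or_eq_neg [NeZero n] (a : ZMod n) : ∃ j ≤ n / 2, a = j ∨ a = -j := by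
  refine ⟨a.valMinAbs.natAbs, ZMod.natAbs_valMinAbs_le a, ?_⟩
  rw [ZMod.natCast_natAbs_valMinAbs]
  split_ifs <;> simp

variable (k : ℕ)

local notation "C" => Multiplicative (ZMod (2 * k + 2))

noncomputable def triple (i : Fin k) : lambdaKer C :=
  ⟨bdatum C [xgen (2 * k + 2), xgen (2 * k + 2) ^ ((i : ℕ) + 1),
      xgen (2 * k + 2) ^ (2 * k + 2 - (i : ℕ) - 2)],
    bdatum_triple_mem _ _ _ (by
      simpa using xgen_triple_prod (2 * k + 2) 1 ((i : ℕ) + 1) (2 * k + 2 - (i : ℕ) - 2)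
        (by omega))⟩

lemma triple_eq (i : Fin k) :
    (triple k i : ConjClasses C →₀ ℤ)
      = dirac 1 + dirac ((i + 1 : ℕ) : ZMod (2 * k + 2))
        + dirac (-((i + 2 : ℕ) : ZMod (2 * k + 2))) := by
  change bdatum C [_, _, _] = _
  rw [bdatum_triple, xgen_pow, xgen_pow, show 2 * k + 2 - (i : ℕ) - 2 = 2 * k + 2 - (i + 2)
    by omega, natCast_sub_eq_neg (by omega)]
  rfl

/-- With `v = a.val`, the `i`-th coordinate is `v - (k+1) · #{t ∈ {i+2, 2k+1-i} | t ≤ v}`.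
This is the unique odd function with `weight 1 + weight (i+1) - weight (i+2) = (k+1) • eᵢ`:
oddness forces `weight (k+1) = 0`, and the recursion then determines `weight 1 = (1, …, 1)`. -/
def weight (a : ZMod (2 * k + 2)) (i : Fin k) : ℤ :=
  a.val - (k + 1) * ((if (i : ℕ) + 2 ≤ a.val then 1 else 0)
    + (if 2 * k + 1 ≤ a.val + i then 1 else 0))

lemma weight_zero : weight k 0 = 0 := by
  funext i
  have := i.isLt
  simp only [weight, ZMod.val_zero, Pi.zero_apply]
  split_ifs <;> omega

lemma weight_neg (a : ZMod (2 * k + 2)) : weight k (-a) = -weight k a := by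
  rcases eq_or_ne a 0 with rfl | ha
  · simp [weight_zero]
  funext i
  have hi := i.isLt
  have hv := ZMod.val_lt a
  have hneg : (-a).val = 2 * k + 2 - a.val := by simp [ZMod.neg_val, ha]
  simp only [weight, hneg, Pi.neg_apply]
  split_ifs <;> omega

lemma weight_natCast {j : ℕ} (hj : j < 2 * k + 2) (i : Fin k) :
    weight k j i = j - (k + 1) * ((if (i : ℕ) + 2 ≤ j then 1 else 0)
      + (if 2 * k + 1 ≤ j + i then 1 else 0)) := by
  rw [weight, ZMod.val_cast_of_lt hj]

lemma weight_triple (i : Fin k) :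
    weight k 1 + weight k ((i + 1 : ℕ) : ZMod (2 * k + 2))
        + weight k (-((i + 2 : ℕ) : ZMod (2 * k + 2)))
      = ((k : ℤ) + 1) • Pi.single i 1 := by
  funext j
  have := i.isLt
  have := j.isLt
  rw [weight_neg, ← Nat.cast_one]
  simp only [Pi.add_apply, Pi.neg_apply, Pi.smul_apply, Pi.single_apply, Fin.ext_iff,
    weight_natCast k (show 1 < 2 * k + 2 by omega),
    weight_natCast k (show (i : ℕ) + 1 < 2 * k + 2 by omega),
    weight_natCast k (show (i : ℕ) + 2 < 2 * k + 2 by omega), smul_eq_mul]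
  split_ifs <;> push_cast <;> omega

noncomputable def weightHom : (ConjClasses C →₀ ℤ) →+ (Fin k → ℤ) :=
  liftAddHom fun c => zmultiplesHom _ (weight k (ConjClasses.mkEquiv.symm c).toAdd)

lemma weightHom_dirac (a : ZMod (2 * k + 2)) : weightHom k (dirac a) = weight k a := by
  rw [weightHom, dirac, liftAddHom_apply_single, zmultiplesHom_apply, one_smul]
  rfl

lemma bRel_le_ker_weightHom : bRel C ≤ (weightHom k).ker :=
  bRel_le_ker _ ((weightHom_dirac k 0).trans (weight_zero k)) fun γ => by
    rw [show single (ConjClasses.mk γ) 1 = dirac γ.toAdd from rfl,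
      show single (ConjClasses.mk γ⁻¹) 1 = dirac (-γ.toAdd) from rfl,
      weightHom_dirac, weightHom_dirac, weight_neg, add_neg_cancel]

lemma weightHom_triple (i : Fin k) :
    weightHom k (triple k i) = ((k : ℤ) + 1) • Pi.single i 1 := by
  rw [triple_eq, map_add, map_add, weightHom_dirac, weightHom_dirac, weightHom_dirac,
    weight_triple]

noncomputable def bRelSupTriples : AddSubgroup (ConjClasses C →₀ ℤ) :=
  bRel C ⊔ AddSubgroup.closure (Set.range fun i => (triple k i : ConjClasses C →₀ ℤ))

local notation "π" => QuotientAddGroup.mk' (bRelSupTriples k)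

lemma mk_dirac_neg (a : ZMod (2 * k + 2)) : π (dirac (-a)) = -π (dirac a) := by
  refine eq_neg_of_add_eq_zero_right ?_
  rw [← map_add, QuotientAddGroup.mk'_apply, QuotientAddGroup.eq_zero_iff]
  exact AddSubgroup.mem_sup_left (dirac_add_dirac_neg_mem_bRel a)

lemma mk_dirac_add_two {i : ℕ} (hi : i < k) :
    π (dirac ((i + 2 : ℕ) : ZMod (2 * k + 2)))
      = π (dirac ((i + 1 : ℕ) : ZMod (2 * k + 2))) + π (dirac 1) := by
  have h : π (triple k ⟨i, hi⟩) = 0 :=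
    (QuotientAddGroup.eq_zero_iff _).2 (AddSubgroup.mem_sup_right
      (AddSubgroup.subset_closure ⟨⟨i, hi⟩, rfl⟩))
  rw [triple_eq, map_add, map_add, mk_dirac_neg] at h
  rw [eq_comm, ← sub_eq_zero, ← h]
  abel

lemma mk_dirac_natCast : ∀ j ≤ k + 1, π (dirac (j : ZMod (2 * k + 2))) = j • π (dirac 1)
  | 0, _ => by
    rw [Nat.cast_zero, zero_nsmul, QuotientAddGroup.mk'_apply, QuotientAddGroup.eq_zero_iff]
    exact AddSubgroup.mem_sup_left dirac_zero_mem_bRel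
  | 1, _ => by simp
  | i + 2, hi => by
    rw [mk_dirac_add_two k (by omega), mk_dirac_natCast (i + 1) (by omega), ← succ_nsmul]

lemma card_nsmul_mk_dirac_one : (2 * k + 2) • π (dirac 1) = 0 := by
  have h := mk_dirac_neg k ((k + 1 : ℕ) : ZMod (2 * k + 2))
  rw [← natCast_sub_eq_neg (by omega), show 2 * k + 2 - (k + 1) = k + 1 by omega,
    eq_neg_iff_add_eq_zero, mk_dirac_natCast k (k + 1) le_rfl, ← add_nsmul] at h
  rwa [show k + 1 + (k + 1) = 2 * k + 2 by omega] at h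

noncomputable def degToQuot : ZMod (2 * k + 2) →+ (ConjClasses C →₀ ℤ) ⧸ bRelSupTriples k :=
  ZMod.lift _ ⟨zmultiplesHom _ (π (dirac 1)), by
    rw [zmultiplesHom_apply, natCast_zsmul, card_nsmul_mk_dirac_one]⟩

lemma mk_dirac (a : ZMod (2 * k + 2)) : π (dirac a) = degToQuot k a := by
  have hnat : ∀ j ≤ k + 1, π (dirac (j : ZMod (2 * k + 2))) = degToQuot k j := fun j hj => by
    rw [mk_dirac_natCast k j hj, ← Int.cast_natCast, degToQuot, ZMod.lift_coe]
    simp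
  obtain ⟨j, hj, rfl | rfl⟩ := exists_natCast_eq_or_eq_neg a
  · exact hnat j (by omega)
  · rw [mk_dirac_neg, map_neg, hnat j (by omega)]

lemma lambdaKer_le_bRelSupTriples : lambdaKer C ≤ bRelSupTriples k := fun _ hf =>
  (QuotientAddGroup.eq_zero_iff _).1
    (eq_zero_of_mem_lambdaKer π (degToQuot k).toMultiplicative
      (fun g => mk_dirac k g.toAdd) hf)

end EvenCyclic

/-- For even `m`, `𝔹_{C_m}` is free abelian of rank `m/2 - 1`, with basis
the elements `[x, x^i, x^(m-i-1)]`, `i = 1, …, m/2 - 1`. -/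
theorem BG_cyclic_even_free_with_basis (m : ℕ) (hpos : 0 < m) (hm : Even m) :
    ∃ B : Module.Basis (Fin (m / 2 - 1)) ℤ (BG (Multiplicative (ZMod m))),
      ∀ i : Fin (m / 2 - 1),
        B i = bmk [xgen m, xgen m ^ ((i : ℕ) + 1), xgen m ^ (m - (i : ℕ) - 2)]
          (bdatum_triple_mem _ _ _
            (by
              simpa using xgen_triple_prod m 1 ((i : ℕ) + 1) (m - (i : ℕ) - 2)
                (by have := i.isLt; omega))) := by
  obtain ⟨k, rfl⟩ : ∃ k, m = 2 * k + 2 := by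
    obtain ⟨t, rfl⟩ := hm
    exact ⟨t - 1, by omega⟩
  open EvenCyclic in
  let B := Module.Basis.mk
    (linearIndependent_mk (triple k) (weightHom k) (bRel_le_ker_weightHom k)
      (by positivity) (weightHom_triple k))
    (span_range_mk_eq_top (triple k) (lambdaKer_le_bRelSupTriples k)).ge
  refine ⟨B.reindex (finCongr (by omega)), fun i => ?_⟩
  rw [Module.Basis.reindex_apply, Module.Basis.mk_apply]
  rfl
end

section
/- Let $G=C_2\times C_2=\langle x\rangle\times\langle y\rangle$ be the Klein four-group. Then $\mathbb{B}_G$ is cyclic of order 2, generated by the element $[x,y,xy]$. -/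
open Finsupp

/-- The first standard generator of the Klein four group. -/
def xk : Multiplicative (ZMod 2 × ZMod 2) := Multiplicative.ofAdd (1, 0)

/-- The second standard generator of the Klein four group. -/
def yk : Multiplicative (ZMod 2 × ZMod 2) := Multiplicative.ofAdd (0, 1)

/-!
In `K = C₂ × C₂` every element is its own inverse, so each relation `[γ̂, γ̂⁻¹]` is `2 γ̂` and the
relations only remember the coefficients modulo `2` away from the identity class. The condition
that the product be trivial in `Kᵃᵇ = K` forces the coefficients of `x`, `y` and `xy` to have the
same parity. Hence the parity of the coefficient of `x` is an isomorphism `𝔹_K ≅ ℤ/2`, and it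
sends `[x, y, xy]` to `1`.
-/

noncomputable def parityAt {G : Type*} [Group G] (c : ConjClasses G) :
    (ConjClasses G →₀ ℤ) →+ ZMod 2 :=
  (Int.castAddHom (ZMod 2)).comp (Finsupp.applyAddHom c)

@[simp] lemma parityAt_apply {G : Type*} [Group G] (c : ConjClasses G)
    (f : ConjClasses G →₀ ℤ) :
    parityAt c f = (f c : ZMod 2) := rfl

section InvolutiveGroup

variable {G : Type*} [Group G]

lemma single_one_mem_bRel (k : ℤ) : single (ConjClasses.mk (1 : G)) k ∈ bRel G := by
  simpa using (bRel G).zsmul_mem (AddSubgroup.subset_closure (Set.mem_insert _ _)) k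

lemma single_mem_bRel_of_inv_eq_self {g : G} (hg : g⁻¹ = g) {k : ℤ} (hk : Even k) :
    single (ConjClasses.mk g) k ∈ bRel G := by
  obtain ⟨m, rfl⟩ := hk
  have hpair : single (ConjClasses.mk g) 1 + single (ConjClasses.mk g) 1 ∈ bRel G :=
    AddSubgroup.subset_closure (Set.mem_insert_of_mem _ ⟨g, by rw [hg]⟩)
  have hsum : single (ConjClasses.mk g) (m + m)
      = m • (single (ConjClasses.mk g) 1 + single (ConjClasses.mk g) 1) := by
    rw [← single_add, smul_single, smul_eq_mul, mul_add, mul_one]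
  exact hsum ▸ (bRel G).zsmul_mem hpair m

lemma mem_bRel_iff_of_inv_eq_self (hG : ∀ g : G, g⁻¹ = g) (f : ConjClasses G →₀ ℤ) :
    f ∈ bRel G ↔ ∀ c ≠ ConjClasses.mk 1, parityAt c f = 0 := by
  constructor
  · intro hf c hc
    refine (AddSubgroup.closure_le (parityAt c).ker).2 ?_ hf
    rintro x (rfl | ⟨γ, rfl⟩)
    · simp [Ne.symm hc]
    · simp only [SetLike.mem_coe, AddMonoidHom.mem_ker, map_add, parityAt_apply, hG γ]
      exact CharTwo.add_self_eq_zero _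
  · intro hf
    rw [← f.sum_single, Finsupp.sum]
    refine sum_mem fun c _ => ?_
    obtain ⟨g, rfl⟩ := ConjClasses.mk_surjective c
    by_cases hg : g = 1
    · subst hg
      exact single_one_mem_bRel _
    · refine single_mem_bRel_of_inv_eq_self (hG g) (ZMod.intCast_eq_zero_iff_even.1 ?_)
      exact hf _ (by rwa [Ne, ConjClasses.mk_eq_mk_iff_isConj, isConj_one_left])

end InvolutiveGroup

lemma zmultiples_eq_top_of_injective {A : Type*} [AddGroup A] {n : ℕ} (ψ : A →+ ZMod n)
    (hψ : Function.Injective ψ) {a : A} (ha : ψ a = 1) : AddSubgroup.zmultiples a = ⊤ := by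
  refine (AddSubgroup.eq_top_iff' _).2 fun q => ?_
  obtain ⟨k, hk⟩ := ZMod.intCast_surjective (ψ q)
  have : q = k • a := hψ (by rw [map_zsmul, ha, ← hk, zsmul_one])
  exact this ▸ AddSubgroup.zsmul_mem_zmultiples a k

section KleinFour

local notation "K" => Multiplicative (ZMod 2 × ZMod 2)

lemma klein_inv_eq_self (g : K) : g⁻¹ = g := by
  revert g; decide

lemma klein_cases (g : K) : g = 1 ∨ g = xk ∨ g = yk ∨ g = xk * yk := by
  revert g; decide

-- The degree map, read in `(ℤ/2)²` through `Kᵃᵇ ≅ K`.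
noncomputable def kleinDeg : (ConjClasses K →₀ ℤ) →+ ZMod 2 × ZMod 2 :=
  (MonoidHom.toAdditiveLeft (Abelianization.lift (MonoidHom.id K))).comp (degMap K)

lemma kleinDeg_eq :
    kleinDeg = ((parityAt (.mk xk) + parityAt (.mk (xk * yk))).prod
      (parityAt (.mk yk) + parityAt (.mk (xk * yk)))) := by
  refine Finsupp.addHom_ext fun c k => ?_
  obtain ⟨g, rfl⟩ := ConjClasses.mk_surjective c
  rcases klein_cases g with rfl | rfl | rfl | rfl <;>
    simp [kleinDeg, ConjClasses.mk_eq_mk_iff_isConj, isConj_iff_eq, xk, yk,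
      Prod.ext_iff, ← ofAdd_add]

lemma parityAt_eq_of_mem_lambdaKer {f : ConjClasses K →₀ ℤ} (hf : f ∈ lambdaKer K) :
    parityAt (.mk yk) f = parityAt (.mk xk) f ∧
      parityAt (.mk (xk * yk)) f = parityAt (.mk xk) f := by
  have hdeg : kleinDeg f = 0 := by simp [kleinDeg, show degMap K f = 0 from hf]
  rw [kleinDeg_eq] at hdeg
  simp only [AddMonoidHom.prod_apply, AddMonoidHom.add_apply, Prod.mk_eq_zero] at hdeg
  have h₁ := CharTwo.add_eq_zero.1 hdeg.1
  have h₂ := CharTwo.add_eq_zero.1 hdeg.2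
  exact ⟨h₂.trans h₁.symm, h₁.symm⟩

noncomputable def kleinParity : BG K →+ ZMod 2 :=
  QuotientAddGroup.lift _ ((parityAt (.mk xk)).comp (lambdaKer K).subtype) fun f hf =>
    ((mem_bRel_iff_of_inv_eq_self klein_inv_eq_self _).1 hf _ (by decide))

lemma kleinParity_injective : Function.Injective kleinParity := by
  refine (injective_iff_map_eq_zero _).2 fun q hq => ?_
  induction q using QuotientAddGroup.induction_on with
  | H f =>
    have hx : parityAt (.mk xk) f = 0 := hq
    obtain ⟨hy, hxy⟩ := parityAt_eq_of_mem_lambdaKer f.2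
    refine (QuotientAddGroup.eq_zero_iff _).2 <|
      (mem_bRel_iff_of_inv_eq_self klein_inv_eq_self _).2 fun c hc => ?_
    obtain ⟨g, rfl⟩ := ConjClasses.mk_surjective c
    rcases klein_cases g with rfl | rfl | rfl | rfl
    · exact absurd rfl hc
    · exact hx
    · exact hy.trans hx
    · exact hxy.trans hx

lemma kleinParity_bmk :
    kleinParity (bmk [xk, yk, xk * yk] (bdatum_triple_mem _ _ _ (by decide))) = 1 := by
  show parityAt (.mk xk) (bdatum K [xk, yk, xk * yk]) = 1
  simp [bdatum, ConjClasses.mk_eq_mk_iff_isConj, isConj_iff_eq,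
    show yk ≠ xk by decide, show xk * yk ≠ xk by decide]

lemma kleinParity_surjective : Function.Surjective kleinParity :=
  fun z => ⟨z.val • _, by rw [map_nsmul, kleinParity_bmk, nsmul_one, ZMod.natCast_zmod_val]⟩

end KleinFour

/-- For the Klein four group `G = C₂ × C₂`, the group `𝔹_G` is cyclic of
order 2, generated by `[x, y, xy]`. -/
theorem BG_klein_four_cyclic_of_order_two :
    Nat.card (BG (Multiplicative (ZMod 2 × ZMod 2))) = 2 ∧
    AddSubgroup.zmultiples
        (bmk [xk, yk, xk * yk] (bdatum_triple_mem _ _ _ (by decide))) = ⊤ := by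
  refine ⟨?_, zmultiples_eq_top_of_injective _ kleinParity_injective kleinParity_bmk⟩
  rw [Nat.card_congr (AddEquiv.ofBijective kleinParity
    ⟨kleinParity_injective, kleinParity_surjective⟩).toEquiv, Nat.card_zmod]
end
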